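/- Approximate supermodularity of the MSE (general, heteroscedastic case): assume W = V_K^H H^H H V_K is positive definite with condition number κ₂(W) = λ_max(W)/λ_min(W), and that ‖v_i‖₂ ≤ 1 for all i = 1,…,n. Let μ_min and μ_max be reals with 0 < μ_min ≤ λ_min(Λ^{-1}) and μ_max ≥ λ_max( Λ^{-1} + Σ_{i=1}^n λ_{w,i}^{-1} v_i v_i^H ), and let λ_w^min = min_{1≤i≤n} λ_{w,i}. Then the set function S ↦ MSE(S) is α₀-supermodular for α₀ = [ (λ_w^min + μ_max^{-1}) / (λ_w^min + μ_min^{-1}) ] · μ_min² / ( κ₂(W) · μ_max² ); that is, for all A ⊆ B ⊆ {1,…,n} and u ∉ B, MSE(A ∪ {u}) − MSE(A) ≤ α₀·( MSE(B ∪ {u}) − MSE(B) ). -/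

import Mathlib

open Matrix Finset ComplexOrder

/-- The matrix `M(S) = Λ⁻¹ + ∑_{i ∈ S} λ_{w,i}⁻¹ v_i v_iᴴ`. -/
noncomputable def Mmat {n k : ℕ} (lam : Fin k → ℝ) (lw : Fin n → ℝ)
    (v : Fin n → Fin k → ℂ) (S : Finset (Fin n)) : Matrix (Fin k) (Fin k) ℂ :=
  (Matrix.diagonal fun j => (lam j : ℂ))⁻¹ +
    ∑ i ∈ S, ((lw i : ℂ))⁻¹ • Matrix.vecMulVec (v i) (star (v i))

/-- The matrix `V_K` whose `i`-th row is `v_iᴴ`. -/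
noncomputable def VKmat {n k : ℕ} (v : Fin n → Fin k → ℂ) : Matrix (Fin n) (Fin k) ℂ :=
  Matrix.of fun i j => star (v i j)

/-- The optimal interpolation error covariance `K*(S) = H V_K M(S)⁻¹ V_Kᴴ Hᴴ`. -/
noncomputable def Kstar {n k m : ℕ} (lam : Fin k → ℝ) (lw : Fin n → ℝ)
    (v : Fin n → Fin k → ℂ) (H : Matrix (Fin m) (Fin n) ℂ) (S : Finset (Fin n)) :
    Matrix (Fin m) (Fin m) ℂ :=
  H * VKmat v * (Mmat lam lw v S)⁻¹ * (VKmat v)ᴴ * Hᴴ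

/-- The interpolation mean-square error `MSE(S) = trace K*(S)`, a (nonnegative) real. -/
noncomputable def MSE {n k m : ℕ} (lam : Fin k → ℝ) (lw : Fin n → ℝ)
    (v : Fin n → Fin k → ℂ) (H : Matrix (Fin m) (Fin n) ℂ) (S : Finset (Fin n)) : ℝ :=
  ((Kstar lam lw v H S).trace).re

/-!
Adding sensor `u` to `S` is a rank-one update of `M(S)`, so by Sherman–Morrison the gain
`MSE(S) - MSE(S ∪ {u})` is `aᴴ W a / (λ_{w,u} + vᴴ a)` with `v = v_u` and `a = M(S)⁻¹ v`.
Every `M(S)` lies between `μ_min` and `μ_max` in the Loewner order, and Cauchy–Schwarz for the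
forms `xᴴ y` and `xᴴ M(S) y` then gives `‖v‖² / μ_max² ≤ ‖a‖² ≤ vᴴ a / μ_min` and
`vᴴ a ≤ ‖v‖² / μ_min`. With `λ_min(W) ‖a‖² ≤ aᴴ W a ≤ λ_max(W) ‖a‖²` every gain lies between
`λ_min(W) ‖v‖² / μ_max²` and `λ_max(W) ‖v‖² / μ_min²`, both divided by `λ_{w,u} + ‖v‖² / μ_min`
(the upper bound because `x ↦ x / (λ_{w,u} + x)` is increasing). Hence the gains at `A` and `B`
have ratio at least `μ_min² / (κ₂(W) μ_max²)`, which is at least `α₀`.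
-/

open scoped MatrixOrder

namespace Matrix

section ShermanMorrison

variable {K : Type*} [Field K] {ι : Type*} [Fintype ι] [DecidableEq ι]

theorem inv_add_vecMulVec {P : Matrix ι ι K} (hP : IsUnit P.det) (u w : ι → K)
    (hd : 1 + w ⬝ᵥ (P⁻¹ *ᵥ u) ≠ 0) :
    (P + vecMulVec u w)⁻¹ =
      P⁻¹ - (1 + w ⬝ᵥ (P⁻¹ *ᵥ u))⁻¹ • vecMulVec (P⁻¹ *ᵥ u) (w ᵥ* P⁻¹) := by
  refine inv_eq_right_inv ?_
  rw [Matrix.mul_sub, Matrix.add_mul, Matrix.mul_nonsing_inv _ hP, mul_smul_comm, Matrix.add_mul,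
    mul_vecMulVec, mulVec_mulVec, Matrix.mul_nonsing_inv _ hP, one_mulVec, vecMulVec_mul_vecMulVec,
    vecMulVec_mul, vecMulVec_smul, smul_add, smul_smul, ← add_smul, ← mul_one_add,
    inv_mul_cancel₀ hd, one_smul, add_sub_cancel_right]

theorem inv_diagonal_of_ne_zero {d : ι → K} (hd : ∀ i, d i ≠ 0) :
    (diagonal d)⁻¹ = diagonal fun i => (d i)⁻¹ :=
  inv_eq_right_inv <| by
    rw [diagonal_mul_diagonal, ← diagonal_one]
    exact congrArg diagonal (funext fun i => mul_inv_cancel₀ (hd i))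

theorem trace_mul_inv_sub_trace_mul_inv_add_vecMulVec {P : Matrix ι ι K} (hP : IsUnit P.det)
    (W : Matrix ι ι K) (u w : ι → K) (hd : 1 + w ⬝ᵥ (P⁻¹ *ᵥ u) ≠ 0) :
    (W * P⁻¹).trace - (W * (P + vecMulVec u w)⁻¹).trace =
      (w ᵥ* P⁻¹) ⬝ᵥ (W *ᵥ (P⁻¹ *ᵥ u)) / (1 + w ⬝ᵥ (P⁻¹ *ᵥ u)) := by
  rw [inv_add_vecMulVec hP u w hd, Matrix.mul_sub, trace_sub, sub_sub_cancel, mul_smul_comm,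
    trace_smul, mul_vecMulVec, trace_vecMulVec, dotProduct_comm (W *ᵥ _), smul_eq_mul,
    inv_mul_eq_div]

end ShermanMorrison

variable {𝕜 : Type*} [RCLike 𝕜] {ι : Type*} [Fintype ι]

theorem re_star_dotProduct_self_nonneg (x : ι → 𝕜) : 0 ≤ RCLike.re (star x ⬝ᵥ x) :=
  (RCLike.nonneg_iff.mp (dotProduct_star_self_nonneg x)).1

theorem IsHermitian.star_mulVec_dotProduct {A : Matrix ι ι 𝕜} (hA : A.IsHermitian)
    (x y : ι → 𝕜) : star (A *ᵥ x) ⬝ᵥ y = star x ⬝ᵥ (A *ᵥ y) := by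
  rw [star_mulVec, hA.eq, dotProduct_mulVec]

theorem PosSemidef.norm_dotProduct_mulVec_sq_le {M : Matrix ι ι 𝕜} (hM : M.PosSemidef)
    (x y : ι → 𝕜) :
    ‖star x ⬝ᵥ (M *ᵥ y)‖ ^ 2 ≤
      RCLike.re (star x ⬝ᵥ (M *ᵥ x)) * RCLike.re (star y ⬝ᵥ (M *ᵥ y)) := by
  let := M.toSeminormedAddCommGroup hM
  let := M.toInnerProductSpace hM
  have hCS := inner_mul_inner_self_le (𝕜 := 𝕜) x y
  change ‖(M *ᵥ y) ⬝ᵥ star x‖ * ‖(M *ᵥ x) ⬝ᵥ star y‖ ≤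
    RCLike.re ((M *ᵥ x) ⬝ᵥ star x) * RCLike.re ((M *ᵥ y) ⬝ᵥ star y) at hCS
  have hsymm : star (star x ⬝ᵥ (M *ᵥ y)) = star y ⬝ᵥ (M *ᵥ x) := by
    rw [star_dotProduct, star_star, hM.isHermitian.star_mulVec_dotProduct, dotProduct_comm]
  simp only [dotProduct_comm (M *ᵥ _), ← hsymm, norm_star] at hCS
  simpa [sq] using hCS

theorem re_dotProduct_mulVec_le_of_le {A B : Matrix ι ι 𝕜} (h : A ≤ B) (x : ι → 𝕜) :
    RCLike.re (star x ⬝ᵥ (A *ᵥ x)) ≤ RCLike.re (star x ⬝ᵥ (B *ᵥ x)) := by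
  simpa [sub_mulVec] using (Matrix.le_iff.1 h).re_dotProduct_nonneg x

theorem PosSemidef.re_star_mulVec_dotProduct_mulVec_le {P : Matrix ι ι 𝕜} (hP : P.PosSemidef)
    {μ : ℝ} (hμ : 0 ≤ μ)
    (hPμ : ∀ x, RCLike.re (star x ⬝ᵥ (P *ᵥ x)) ≤ μ * RCLike.re (star x ⬝ᵥ x)) (a : ι → 𝕜) :
    RCLike.re (star (P *ᵥ a) ⬝ᵥ (P *ᵥ a)) ≤ μ ^ 2 * RCLike.re (star a ⬝ᵥ a) := by
  have hCS := hP.norm_dotProduct_mulVec_sq_le (P *ᵥ a) a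
  have hs := RCLike.re_le_norm (star (P *ᵥ a) ⬝ᵥ (P *ᵥ a))
  have hs0 := re_star_dotProduct_self_nonneg (P *ᵥ a)
  have ht0 := re_star_dotProduct_self_nonneg a
  have h1 := hPμ (P *ᵥ a)
  have h2 := hPμ a
  have hq0 := hP.re_dotProduct_nonneg a
  generalize RCLike.re (star a ⬝ᵥ (P *ᵥ a)) = q at *
  generalize RCLike.re (star a ⬝ᵥ a) = t at *
  generalize RCLike.re (star (P *ᵥ a) ⬝ᵥ (P *ᵥ P *ᵥ a)) = r at *
  generalize RCLike.re (star (P *ᵥ a) ⬝ᵥ (P *ᵥ a)) = s at *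
  have hs2 : s ^ 2 ≤ μ ^ 2 * t * s := calc
    s ^ 2 ≤ r * q := (pow_le_pow_left₀ hs0 hs 2).trans hCS
    _ ≤ (μ * s) * (μ * t) := mul_le_mul h1 h2 hq0 (mul_nonneg hμ hs0)
    _ = μ ^ 2 * t * s := by ring
  nlinarith [mul_nonneg (sq_nonneg μ) ht0]

variable [DecidableEq ι]

theorem mul_re_dotProduct_mulVec_le_re_star_mulVec_dotProduct_mulVec {P : Matrix ι ι 𝕜}
    {μ : ℝ} (hμ : 0 < μ)
    (hP : ∀ x, μ * RCLike.re (star x ⬝ᵥ x) ≤ RCLike.re (star x ⬝ᵥ (P *ᵥ x))) (a : ι → 𝕜) :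
    μ * RCLike.re (star a ⬝ᵥ (P *ᵥ a)) ≤ RCLike.re (star (P *ᵥ a) ⬝ᵥ (P *ᵥ a)) := by
  have hCS := PosSemidef.one.norm_dotProduct_mulVec_sq_le a (P *ᵥ a)
  simp only [one_mulVec] at hCS
  have hq := RCLike.re_le_norm (star a ⬝ᵥ (P *ᵥ a))
  have ht := hP a
  have ht0 := re_star_dotProduct_self_nonneg a
  have hs0 := re_star_dotProduct_self_nonneg (P *ᵥ a)
  generalize RCLike.re (star a ⬝ᵥ (P *ᵥ a)) = q at *
  generalize RCLike.re (star a ⬝ᵥ a) = t at *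
  generalize RCLike.re (star (P *ᵥ a) ⬝ᵥ (P *ᵥ a)) = s at *
  have hq0 : 0 ≤ q := by nlinarith
  have hq2 : q ^ 2 ≤ t * s := (pow_le_pow_left₀ hq0 hq 2).trans hCS
  nlinarith [mul_le_mul_of_nonneg_right ht hs0, mul_le_mul_of_nonneg_left hq2 hμ.le]

theorem re_dotProduct_algebraMap_mulVec (r : ℝ) (x : ι → 𝕜) :
    RCLike.re (star x ⬝ᵥ (algebraMap ℝ (Matrix ι ι 𝕜) r *ᵥ x)) =
      r * RCLike.re (star x ⬝ᵥ x) := by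
  simp [Algebra.algebraMap_eq_smul_one, smul_mulVec, dotProduct_smul, RCLike.smul_re]

theorem le_of_forall_le_re_dotProduct_mulVec_le [Nonempty ι] {A : Matrix ι ι 𝕜} {a b : ℝ}
    (ha : ∀ x, a * RCLike.re (star x ⬝ᵥ x) ≤ RCLike.re (star x ⬝ᵥ (A *ᵥ x)))
    (hb : ∀ x, RCLike.re (star x ⬝ᵥ (A *ᵥ x)) ≤ b * RCLike.re (star x ⬝ᵥ x)) : a ≤ b := by
  obtain ⟨i⟩ := ‹Nonempty ι›
  have hunit : RCLike.re (star (Pi.single i 1 : ι → 𝕜) ⬝ᵥ Pi.single i 1) = 1 := by simp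
  simpa [hunit] using (ha (Pi.single i 1)).trans (hb _)

theorem IsHermitian.re_dotProduct_mulVec_le_of_eigenvalues_le {A : Matrix ι ι 𝕜}
    (hA : A.IsHermitian) {r : ℝ} (h : ∀ i, hA.eigenvalues i ≤ r) (x : ι → 𝕜) :
    RCLike.re (star x ⬝ᵥ (A *ᵥ x)) ≤ r * RCLike.re (star x ⬝ᵥ x) := by
  have hle : A ≤ algebraMap ℝ (Matrix ι ι 𝕜) r :=
    (le_algebraMap_iff_spectrum_le hA.isSelfAdjoint).2 <| by
      rw [hA.spectrum_real_eq_range_eigenvalues]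
      rintro _ ⟨i, rfl⟩
      exact h i
  simpa [re_dotProduct_algebraMap_mulVec] using re_dotProduct_mulVec_le_of_le hle x

theorem IsHermitian.le_re_dotProduct_mulVec_of_le_eigenvalues {A : Matrix ι ι 𝕜}
    (hA : A.IsHermitian) {r : ℝ} (h : ∀ i, r ≤ hA.eigenvalues i) (x : ι → 𝕜) :
    r * RCLike.re (star x ⬝ᵥ x) ≤ RCLike.re (star x ⬝ᵥ (A *ᵥ x)) := by
  have hle : algebraMap ℝ (Matrix ι ι 𝕜) r ≤ A :=
    (algebraMap_le_iff_le_spectrum hA.isSelfAdjoint).2 <| by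
      rw [hA.spectrum_real_eq_range_eigenvalues]
      rintro _ ⟨i, rfl⟩
      exact h i
  simpa [re_dotProduct_algebraMap_mulVec] using re_dotProduct_mulVec_le_of_le hle x

end Matrix

section RankOneTraceGain

variable {𝕜 : Type*} [RCLike 𝕜] {ι : Type*} [Fintype ι] [DecidableEq ι]

noncomputable def rankOneTraceGain (W P : Matrix ι ι 𝕜) (c : ℝ) (v : ι → 𝕜) : ℝ :=
  RCLike.re (star (P⁻¹ *ᵥ v) ⬝ᵥ (W *ᵥ (P⁻¹ *ᵥ v))) / (c + RCLike.re (star v ⬝ᵥ (P⁻¹ *ᵥ v)))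

theorem re_trace_mul_inv_sub_re_trace_mul_inv_add_vecMulVec {P : Matrix ι ι 𝕜} (hP : P.PosDef)
    (W : Matrix ι ι 𝕜) {c : ℝ} (hc : 0 < c) (v : ι → 𝕜) :
    RCLike.re (W * P⁻¹).trace -
        RCLike.re (W * (P + vecMulVec ((c : 𝕜)⁻¹ • v) (star v))⁻¹).trace =
      rankOneTraceGain W P c v := by
  obtain ⟨q, hq0, hq⟩ := RCLike.nonneg_iff_exists_ofReal.mp
    (hP.inv.posSemidef.dotProduct_mulVec_nonneg v)
  have hstar : star v ᵥ* P⁻¹ = star (P⁻¹ *ᵥ v) := by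
    rw [star_mulVec, hP.inv.isHermitian.eq]
  have hc' : (c : 𝕜) ≠ 0 := RCLike.ofReal_ne_zero.mpr hc.ne'
  have hcq : (c : 𝕜) + q ≠ 0 := by exact_mod_cast (by positivity : c + q ≠ 0)
  have hd : 1 + star v ⬝ᵥ (P⁻¹ *ᵥ ((c : 𝕜)⁻¹ • v)) ≠ 0 := by
    rw [mulVec_smul, dotProduct_smul, ← hq, smul_eq_mul]
    field_simp
    exact div_ne_zero hcq hc'
  rw [← map_sub, trace_mul_inv_sub_trace_mul_inv_add_vecMulVec
      ((isUnit_iff_isUnit_det P).mp hP.isUnit) W _ _ hd,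
    hstar, mulVec_smul, mulVec_smul, dotProduct_smul, dotProduct_smul, ← hq, smul_eq_mul,
    smul_eq_mul, rankOneTraceGain, ← hq, RCLike.ofReal_re]
  rw [show (c : 𝕜)⁻¹ * star (P⁻¹ *ᵥ v) ⬝ᵥ (W *ᵥ (P⁻¹ *ᵥ v)) / (1 + (c : 𝕜)⁻¹ * q)
      = star (P⁻¹ *ᵥ v) ⬝ᵥ (W *ᵥ (P⁻¹ *ᵥ v)) / ((c + q : ℝ) : 𝕜) by
    push_cast; field_simp, RCLike.div_re_ofReal]

theorem rankOneTraceGain_mulVec {P : Matrix ι ι 𝕜} (hP : P.PosDef) (W : Matrix ι ι 𝕜) (c : ℝ)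
    (a : ι → 𝕜) :
    rankOneTraceGain W P c (P *ᵥ a) =
      RCLike.re (star a ⬝ᵥ (W *ᵥ a)) / (c + RCLike.re (star a ⬝ᵥ (P *ᵥ a))) := by
  rw [rankOneTraceGain, mulVec_mulVec,
    nonsing_inv_mul _ ((isUnit_iff_isUnit_det P).mp hP.isUnit), one_mulVec,
    hP.isHermitian.star_mulVec_dotProduct]

theorem rankOneTraceGain_nonneg {W P : Matrix ι ι 𝕜} (hW : W.PosSemidef) (hP : P.PosDef)
    {c : ℝ} (hc : 0 < c) (v : ι → 𝕜) : 0 ≤ rankOneTraceGain W P c v :=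
  div_nonneg (hW.re_dotProduct_nonneg _)
    (add_pos_of_pos_of_nonneg hc (hP.inv.posSemidef.re_dotProduct_nonneg v)).le

variable {W P : Matrix ι ι 𝕜} (hW : W.IsHermitian) (hP : P.PosDef) {μmin : ℝ} (hμmin : 0 < μmin)
  (hPmin : ∀ x, μmin * RCLike.re (star x ⬝ᵥ x) ≤ RCLike.re (star x ⬝ᵥ (P *ᵥ x)))
  {c : ℝ} (hc : 0 < c) (v : ι → 𝕜)
include hP hμmin hPmin hc

theorem rankOneTraceGain_le {wmax : ℝ} (hwmax0 : 0 ≤ wmax)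
    (hwmax : ∀ i, hW.eigenvalues i ≤ wmax) :
    rankOneTraceGain W P c v ≤
      wmax * RCLike.re (star v ⬝ᵥ v) / μmin ^ 2 / (c + RCLike.re (star v ⬝ᵥ v) / μmin) := by
  obtain ⟨a, rfl⟩ := mulVec_surjective_iff_isUnit.2 hP.isUnit v
  have hN := hW.re_dotProduct_mulVec_le_of_eigenvalues_le hwmax a
  have ht := hPmin a
  have hs := mul_re_dotProduct_mulVec_le_re_star_mulVec_dotProduct_mulVec hμmin hPmin a
  have hq0 := hP.posSemidef.re_dotProduct_nonneg a
  rw [rankOneTraceGain_mulVec hP]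
  generalize RCLike.re (star a ⬝ᵥ (P *ᵥ a)) = q at *
  generalize RCLike.re (star a ⬝ᵥ a) = t at *
  generalize RCLike.re (star (P *ᵥ a) ⬝ᵥ (P *ᵥ a)) = s at *
  generalize RCLike.re (star a ⬝ᵥ (W *ᵥ a)) = N at *
  have hqs : q ≤ s / μmin := (le_div_iff₀ hμmin).2 (by linarith)
  calc N / (c + q) ≤ wmax / μmin * (q / (c + q)) := by
        rw [mul_div_assoc', div_le_div_iff_of_pos_right (by positivity), div_mul_eq_mul_div,
          le_div_iff₀ hμmin]
        nlinarith
    _ ≤ wmax / μmin * (s / μmin / (c + s / μmin)) := by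
        refine mul_le_mul_of_nonneg_left ?_ (by positivity)
        rw [div_le_div_iff₀ (by positivity) (by linarith)]
        nlinarith
    _ = wmax * s / μmin ^ 2 / (c + s / μmin) := by ring

theorem le_rankOneTraceGain {μmax : ℝ} (hμmax : 0 ≤ μmax)
    (hPmax : ∀ x, RCLike.re (star x ⬝ᵥ (P *ᵥ x)) ≤ μmax * RCLike.re (star x ⬝ᵥ x))
    {wmin : ℝ} (hwmin0 : 0 ≤ wmin) (hwmin : ∀ i, wmin ≤ hW.eigenvalues i) :
    wmin * RCLike.re (star v ⬝ᵥ v) / μmax ^ 2 / (c + RCLike.re (star v ⬝ᵥ v) / μmin) ≤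
      rankOneTraceGain W P c v := by
  obtain ⟨a, rfl⟩ := mulVec_surjective_iff_isUnit.2 hP.isUnit v
  have hN := hW.le_re_dotProduct_mulVec_of_le_eigenvalues hwmin a
  have hst := hP.posSemidef.re_star_mulVec_dotProduct_mulVec_le hμmax hPmax a
  have hqs := mul_re_dotProduct_mulVec_le_re_star_mulVec_dotProduct_mulVec hμmin hPmin a
  have hq0 := hP.posSemidef.re_dotProduct_nonneg a
  have ht0 := re_star_dotProduct_self_nonneg a
  rw [rankOneTraceGain_mulVec hP]
  generalize RCLike.re (star a ⬝ᵥ (P *ᵥ a)) = q at *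
  generalize RCLike.re (star a ⬝ᵥ a) = t at *
  generalize RCLike.re (star (P *ᵥ a) ⬝ᵥ (P *ᵥ a)) = s at *
  generalize RCLike.re (star a ⬝ᵥ (W *ᵥ a)) = N at *
  calc wmin * s / μmax ^ 2 / (c + s / μmin) ≤ wmin * t / (c + q) := by
        refine div_le_div₀ (by positivity) ?_ (by positivity) ?_
        · rw [mul_div_assoc]
          exact mul_le_mul_of_nonneg_left
            (div_le_of_le_mul₀ (by positivity) ht0 (by linarith)) hwmin0
        · linarith [(le_div_iff₀ hμmin).2 (by linarith : q * μmin ≤ s)]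
    _ ≤ N / (c + q) := by gcongr

end RankOneTraceGain

section Sensors

variable {n k m : ℕ} {lam : Fin k → ℝ} {lw : Fin n → ℝ} {v : Fin n → Fin k → ℂ}

theorem Mmat_insert {S : Finset (Fin n)} {u : Fin n} (hu : u ∉ S) :
    Mmat lam lw v (insert u S) =
      Mmat lam lw v S + vecMulVec ((lw u : ℂ)⁻¹ • v u) (star (v u)) := by
  rw [Mmat, Mmat, sum_insert hu, smul_vecMulVec]
  abel

theorem posSemidef_inv_smul_vecMulVec (hlw : ∀ i, 0 < lw i) (i : Fin n) :
    ((lw i : ℂ)⁻¹ • vecMulVec (v i) (star (v i))).PosSemidef :=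
  (posSemidef_vecMulVec_self_star (v i)).smul (by simpa using (hlw i).le)

theorem Mmat_mono (hlw : ∀ i, 0 < lw i) {S T : Finset (Fin n)} (hST : S ⊆ T) :
    Mmat lam lw v S ≤ Mmat lam lw v T := by
  rw [Matrix.le_iff, Mmat, Mmat, add_sub_add_left_eq_sub, ← sum_sdiff hST, add_sub_cancel_right]
  exact posSemidef_sum _ fun i _ => posSemidef_inv_smul_vecMulVec hlw i

theorem inv_diagonal_ofReal (hlam : ∀ j, 0 < lam j) :
    (diagonal fun j => (lam j : ℂ))⁻¹ = diagonal fun j => (((lam j)⁻¹ : ℝ) : ℂ) := by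
  rw [inv_diagonal_of_ne_zero fun j => Complex.ofReal_ne_zero.2 (hlam j).ne']
  simp only [Complex.ofReal_inv]

theorem Mmat_posDef (hlam : ∀ j, 0 < lam j) (hlw : ∀ i, 0 < lw i) (S : Finset (Fin n)) :
    (Mmat lam lw v S).PosDef := by
  rw [Mmat, inv_diagonal_ofReal hlam]
  exact (posDef_diagonal_iff.2 fun j => by simpa using hlam j).add_posSemidef
    (posSemidef_sum _ fun i _ => posSemidef_inv_smul_vecMulVec hlw i)

theorem algebraMap_le_Mmat (hlam : ∀ j, 0 < lam j) (hlw : ∀ i, 0 < lw i) {μ : ℝ}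
    (hμ : ∀ j, μ ≤ (lam j)⁻¹) (S : Finset (Fin n)) :
    algebraMap ℝ (Matrix (Fin k) (Fin k) ℂ) μ ≤ Mmat lam lw v S := by
  rw [Matrix.le_iff, Mmat, add_sub_right_comm, inv_diagonal_ofReal hlam, algebraMap_eq_diagonal,
    diagonal_sub]
  refine .add (posSemidef_diagonal_iff.2 fun j => ?_)
    (posSemidef_sum _ fun i _ => posSemidef_inv_smul_vecMulVec hlw i)
  rw [Pi.algebraMap_apply, Complex.coe_algebraMap, ← Complex.ofReal_sub]
  exact_mod_cast sub_nonneg.2 (hμ j)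

theorem mul_re_dotProduct_le_re_dotProduct_Mmat_mulVec (hlam : ∀ j, 0 < lam j)
    (hlw : ∀ i, 0 < lw i) {μ : ℝ} (hμ : ∀ j, μ ≤ (lam j)⁻¹) (S : Finset (Fin n))
    (x : Fin k → ℂ) :
    μ * (star x ⬝ᵥ x).re ≤ (star x ⬝ᵥ (Mmat lam lw v S *ᵥ x)).re := by
  simpa [re_dotProduct_algebraMap_mulVec] using
    re_dotProduct_mulVec_le_of_le (algebraMap_le_Mmat hlam hlw hμ S) x

theorem MSE_eq_re_trace (H : Matrix (Fin m) (Fin n) ℂ) (S : Finset (Fin n)) :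
    MSE lam lw v H S = ((VKmat v)ᴴ * Hᴴ * H * VKmat v * (Mmat lam lw v S)⁻¹).trace.re := by
  rw [MSE, Kstar, Matrix.mul_assoc (H * VKmat v * _), trace_mul_comm]
  simp only [Matrix.mul_assoc]

section InsertOne

variable (hlam : ∀ j, 0 < lam j) (hlw : ∀ i, 0 < lw i) (H : Matrix (Fin m) (Fin n) ℂ)
  {S : Finset (Fin n)} {u : Fin n} (hu : u ∉ S)
include hlam hlw hu

theorem MSE_sub_MSE_insert :
    MSE lam lw v H S - MSE lam lw v H (insert u S) =
      rankOneTraceGain ((VKmat v)ᴴ * Hᴴ * H * VKmat v) (Mmat lam lw v S) (lw u) (v u) := by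
  rw [MSE_eq_re_trace, MSE_eq_re_trace, Mmat_insert hu]
  exact re_trace_mul_inv_sub_re_trace_mul_inv_add_vecMulVec (Mmat_posDef hlam hlw S) _
    (hlw u) (v u)

theorem MSE_insert_le : MSE lam lw v H (insert u S) ≤ MSE lam lw v H S := by
  rw [← sub_nonneg, MSE_sub_MSE_insert hlam hlw H hu, Matrix.mul_assoc, ← conjTranspose_mul]
  exact rankOneTraceGain_nonneg (posSemidef_conjTranspose_mul_self _) (Mmat_posDef hlam hlw S)
    (hlw u) (v u)

variable {μmin : ℝ} (hμmin0 : 0 < μmin) (hμmin : ∀ j, μmin ≤ (lam j)⁻¹)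
  (hW : ((VKmat v)ᴴ * Hᴴ * H * VKmat v).IsHermitian)
include hμmin0 hμmin

theorem MSE_sub_MSE_insert_le {wmax : ℝ} (hwmax0 : 0 ≤ wmax)
    (hwmax : ∀ i, hW.eigenvalues i ≤ wmax) :
    MSE lam lw v H S - MSE lam lw v H (insert u S) ≤
      wmax * (star (v u) ⬝ᵥ v u).re / μmin ^ 2 / (lw u + (star (v u) ⬝ᵥ v u).re / μmin) := by
  rw [MSE_sub_MSE_insert hlam hlw H hu]
  exact rankOneTraceGain_le hW (Mmat_posDef hlam hlw S) hμmin0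
    (mul_re_dotProduct_le_re_dotProduct_Mmat_mulVec hlam hlw hμmin S) (hlw u) (v u) hwmax0 hwmax

theorem le_MSE_sub_MSE_insert {μmax : ℝ} (hμmax0 : 0 ≤ μmax)
    (hμmax : ∀ x : Fin k → ℂ,
      (star x ⬝ᵥ (Mmat lam lw v Finset.univ *ᵥ x)).re ≤ μmax * (star x ⬝ᵥ x).re)
    {wmin : ℝ} (hwmin0 : 0 ≤ wmin) (hwmin : ∀ i, wmin ≤ hW.eigenvalues i) :
    wmin * (star (v u) ⬝ᵥ v u).re / μmax ^ 2 / (lw u + (star (v u) ⬝ᵥ v u).re / μmin) ≤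
      MSE lam lw v H S - MSE lam lw v H (insert u S) := by
  rw [MSE_sub_MSE_insert hlam hlw H hu]
  exact le_rankOneTraceGain hW (Mmat_posDef hlam hlw S) hμmin0
    (mul_re_dotProduct_le_re_dotProduct_Mmat_mulVec hlam hlw hμmin S) (hlw u) (v u) hμmax0
    (fun x => (re_dotProduct_mulVec_le_of_le (Mmat_mono hlw (subset_univ S)) x).trans (hμmax x))
    hwmin0 hwmin

end InsertOne

theorem mul_MSE_sub_MSE_insert_le (hlam : ∀ j, 0 < lam j) (hlw : ∀ i, 0 < lw i)
    (H : Matrix (Fin m) (Fin n) ℂ) (hW : ((VKmat v)ᴴ * Hᴴ * H * VKmat v).IsHermitian)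
    {wmin wmax : ℝ} (hwmin0 : 0 < wmin) (hwmax0 : 0 < wmax)
    (hwmin : ∀ i, wmin ≤ hW.eigenvalues i) (hwmax : ∀ i, hW.eigenvalues i ≤ wmax)
    {μmin μmax : ℝ} (hμmin0 : 0 < μmin) (hμmin : ∀ j, μmin ≤ (lam j)⁻¹) (hμ : μmin ≤ μmax)
    (hμmax : ∀ x : Fin k → ℂ,
      (star x ⬝ᵥ (Mmat lam lw v Finset.univ *ᵥ x)).re ≤ μmax * (star x ⬝ᵥ x).re)
    {A B : Finset (Fin n)} (hAB : A ⊆ B) {u : Fin n} (hu : u ∉ B) :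
    μmin ^ 2 / (wmax / wmin * μmax ^ 2) * (MSE lam lw v H B - MSE lam lw v H (insert u B)) ≤
      MSE lam lw v H A - MSE lam lw v H (insert u A) := by
  have hμmax0 : 0 < μmax := hμmin0.trans_le hμ
  have hgainA := le_MSE_sub_MSE_insert hlam hlw H (fun h => hu (hAB h)) hμmin0 hμmin hW
    hμmax0.le hμmax hwmin0.le hwmin
  have hgainB := MSE_sub_MSE_insert_le hlam hlw H hu hμmin0 hμmin hW hwmax0.le hwmax
  set s := (star (v u) ⬝ᵥ v u).re
  calc μmin ^ 2 / (wmax / wmin * μmax ^ 2) * (MSE lam lw v H B - MSE lam lw v H (insert u B))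
      ≤ μmin ^ 2 / (wmax / wmin * μmax ^ 2) * (wmax * s / μmin ^ 2 / (lw u + s / μmin)) := by
        gcongr
    _ = wmin * s / μmax ^ 2 / (lw u + s / μmin) := by field_simp
    _ ≤ MSE lam lw v H A - MSE lam lw v H (insert u A) := hgainA

end Sensors

theorem MSE_alpha_supermodular_general_general
    (n k m : ℕ)
    (v : Fin n → Fin k → ℂ)
    (H : Matrix (Fin m) (Fin n) ℂ)
    (lam : Fin k → ℝ) (hlam : ∀ j, 0 < lam j)
    (lw : Fin n → ℝ) (hlw : ∀ i, 0 < lw i)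
    (W : Matrix (Fin k) (Fin k) ℂ)
    (hWdef : W = (VKmat v)ᴴ * Hᴴ * H * VKmat v)
    (hW : W.PosDef)
    (wmin wmax : ℝ)
    (hwmin : IsLeast (Set.range hW.1.eigenvalues) wmin)
    (hwmax : IsGreatest (Set.range hW.1.eigenvalues) wmax)
    (kappa : ℝ) (hkappa : kappa = wmax / wmin)
    (μmin μmax : ℝ)
    (hμmin0 : 0 < μmin)
    (hμmin : ∀ j, μmin ≤ (lam j)⁻¹)
    (hμmax : ∀ x : Fin k → ℂ,
      (star x ⬝ᵥ (Mmat lam lw v Finset.univ *ᵥ x)).re ≤ μmax * (star x ⬝ᵥ x).re)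
    (lwmin : ℝ) (hlwmin : IsLeast (Set.range lw) lwmin)
    (α₀ : ℝ)
    (hα₀ : α₀ = ((lwmin + μmax⁻¹) / (lwmin + μmin⁻¹)) * (μmin ^ 2 / (kappa * μmax ^ 2)))
    (A B : Finset (Fin n)) (hAB : A ⊆ B) (u : Fin n) (hu : u ∉ B) :
    MSE lam lw v H (insert u A) - MSE lam lw v H A ≤
      α₀ * (MSE lam lw v H (insert u B) - MSE lam lw v H B) := by
  subst hWdef hkappa
  obtain ⟨i₀, hi₀⟩ := hwmin.1
  obtain ⟨iw, rfl⟩ := hlwmin.1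
  have : Nonempty (Fin k) := ⟨i₀⟩
  have hwmin0 : 0 < wmin := hi₀ ▸ hW.eigenvalues_pos i₀
  have hwmax0 : 0 < wmax := hwmin0.trans_le (hwmax.2 ⟨i₀, hi₀⟩)
  have hμ : μmin ≤ μmax := le_of_forall_le_re_dotProduct_mulVec_le
    (mul_re_dotProduct_le_re_dotProduct_Mmat_mulVec hlam hlw hμmin univ) hμmax
  have hα : α₀ ≤ μmin ^ 2 / (wmax / wmin * μmax ^ 2) := by
    rw [hα₀]
    refine mul_le_of_le_one_left (by positivity) (div_le_one_of_le₀ ?_ ?_)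
    · linarith [inv_anti₀ hμmin0 hμ]
    · linarith [hlw iw, inv_pos.2 hμmin0]
  have hgain := mul_MSE_sub_MSE_insert_le hlam hlw H hW.1 hwmin0 hwmax0
    (fun i => hwmin.2 ⟨i, rfl⟩) (fun i => hwmax.2 ⟨i, rfl⟩) hμmin0 hμmin hμ hμmax hAB hu
  have hgainB := sub_nonneg.2 (MSE_insert_le (v := v) hlam hlw H hu)
  nlinarith [mul_le_mul_of_nonneg_right hα hgainB]

/-- Approximate supermodularity of the MSE (heteroscedastic case):
with `W = V_Kᴴ Hᴴ H V_K` positive definite, condition number `κ₂(W) = λ_max(W)/λ_min(W)`,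
`‖v_i‖₂ ≤ 1` for all `i`, `0 < μ_min ≤ λ_min(Λ⁻¹)`,
`μ_max ≥ λ_max(Λ⁻¹ + ∑_i λ_{w,i}⁻¹ v_i v_iᴴ)`, and `λ_w^min = min_i λ_{w,i}`, the set
function `S ↦ MSE(S)` is `α₀`-supermodular for
`α₀ = ((λ_w^min + μ_max⁻¹)/(λ_w^min + μ_min⁻¹)) · μ_min²/(κ₂(W) μ_max²)`. -/
theorem MSE_alpha_supermodular_general
    (n k m : ℕ)
    (v : Fin n → Fin k → ℂ)
    (H : Matrix (Fin m) (Fin n) ℂ)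
    (lam : Fin k → ℝ) (hlam : ∀ j, 0 < lam j)
    (lw : Fin n → ℝ) (hlw : ∀ i, 0 < lw i)
    (W : Matrix (Fin k) (Fin k) ℂ)
    (hWdef : W = (VKmat v)ᴴ * Hᴴ * H * VKmat v)
    (hW : W.PosDef)
    (wmin wmax : ℝ)
    (hwmin : IsLeast (Set.range hW.1.eigenvalues) wmin)
    (hwmax : IsGreatest (Set.range hW.1.eigenvalues) wmax)
    (kappa : ℝ) (hkappa : kappa = wmax / wmin)
    (hnorm : ∀ i, ∑ j, ‖v i j‖ ^ 2 ≤ 1)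
    (μmin μmax : ℝ)
    (hμmin0 : 0 < μmin)
    (hμmin : ∀ j, μmin ≤ (lam j)⁻¹)
    (hμmax : ∀ x : Fin k → ℂ,
      (star x ⬝ᵥ (Mmat lam lw v Finset.univ *ᵥ x)).re ≤ μmax * (star x ⬝ᵥ x).re)
    (lwmin : ℝ) (hlwmin : IsLeast (Set.range lw) lwmin)
    (α₀ : ℝ)
    (hα₀ : α₀ = ((lwmin + μmax⁻¹) / (lwmin + μmin⁻¹)) * (μmin ^ 2 / (kappa * μmax ^ 2)))
    (A B : Finset (Fin n)) (hAB : A ⊆ B) (u : Fin n) (hu : u ∉ B) :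
    MSE lam lw v H (insert u A) - MSE lam lw v H A ≤
      α₀ * (MSE lam lw v H (insert u B) - MSE lam lw v H B) :=
  MSE_alpha_supermodular_general_general n k m v H lam hlam lw hlw W hWdef hW wmin wmax hwmin hwmax
    kappa hkappa μmin μmax hμmin0 hμmin hμmax lwmin hlwmin α₀ hα₀ A B hAB u hu
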